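/- Let d ≥ 2, let D ∈ ℝ^{d×d} be a diagonal positive semidefinite matrix with largest diagonal entry D_max and smallest diagonal entry equal to 0, and let n ≥ 1 be a real number. Let σ denote the uniform surface measure on the unit sphere S^{d−1} ⊂ ℝ^d, and define the normalized densities p(x) = exp(xᵀDx) / ∫_{S^{d−1}} exp(yᵀDy) dσ(y) and q(x) = (xᵀ(I + D/n)x)^n / ∫_{S^{d−1}} (yᵀ(I + D/n)y)^n dσ(y). If v is a unit vector with Dv = 0, then 1 ≤ q(v)/p(v) ≤ exp(D_max²/(2n)). -/

import Mathlib

open Matrix Real MeasureTheory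

/-!
On the unit sphere the quadratic form `t x = xᵀ D x` takes values in `[0, Dmax]`, and
`xᵀ (I + D/n) x = 1 + t x / n`. Since `D v = 0`, both numerators at `v` equal `1`, so
`q v / p v = ∫ exp t / ∫ (1 + t/n)ⁿ`. The claim then follows by integrating the pointwise bounds
`(1 + t/n)ⁿ ≤ exp t ≤ (1 + t/n)ⁿ exp (t² / (2n))`; the upper one comes from
`log (1 + u) ≥ u - u²/2` with `u = t/n`.
-/

namespace Real

theorem sub_sq_div_two_le_log_one_add {u : ℝ} (hu : 0 ≤ u) : u - u ^ 2 / 2 ≤ log (1 + u) := by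
  refine le_trans ?_ (le_log_one_add_of_nonneg hu)
  rw [le_div_iff₀ (by linarith)]
  nlinarith [pow_nonneg hu 3]

theorem one_add_div_rpow_le_exp {t n : ℝ} (ht : 0 ≤ t) (hn : 0 < n) :
    (1 + t / n) ^ n ≤ exp t := by
  have hpos : 0 < 1 + t / n := by positivity
  rw [rpow_def_of_pos hpos, exp_le_exp]
  calc log (1 + t / n) * n ≤ t / n * n := by
        gcongr
        linarith [log_le_sub_one_of_pos hpos]
    _ = t := div_mul_cancel₀ t hn.ne'

theorem exp_le_one_add_div_rpow_mul_exp {t n : ℝ} (ht : 0 ≤ t) (hn : 0 < n) :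
    exp t ≤ (1 + t / n) ^ n * exp (t ^ 2 / (2 * n)) := by
  have hu : 0 ≤ t / n := by positivity
  have hlow : exp (t - t ^ 2 / (2 * n)) ≤ (1 + t / n) ^ n :=
    calc exp (t - t ^ 2 / (2 * n)) = exp (t / n - (t / n) ^ 2 / 2) ^ n := by
          rw [← exp_mul]; congr 1; field_simp
      _ ≤ (1 + t / n) ^ n := by
          gcongr
          exact (exp_le_exp.2 (sub_sq_div_two_le_log_one_add hu)).trans_eq (exp_log (by positivity))
  calc exp t = exp (t - t ^ 2 / (2 * n)) * exp (t ^ 2 / (2 * n)) := by rw [← exp_add]; ring_nf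
    _ ≤ (1 + t / n) ^ n * exp (t ^ 2 / (2 * n)) := by gcongr

end Real

namespace Matrix.IsDiag

variable {ι R : Type*} [Fintype ι] {D : Matrix ι ι R}

theorem dotProduct_mulVec_self [CommSemiring R] (hD : D.IsDiag) (x : ι → R) :
    x ⬝ᵥ D *ᵥ x = ∑ i, D i i * x i ^ 2 := by
  classical
  rw [← hD.diagonal_diag, dotProduct]
  refine Finset.sum_congr rfl fun i _ ↦ ?_
  rw [mulVec_diagonal, diagonal_apply_eq]
  ring

variable [CommRing R] [LinearOrder R] [IsStrictOrderedRing R]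

theorem dotProduct_mulVec_self_nonneg (hD : D.IsDiag) (hD₀ : ∀ i, 0 ≤ D i i) (x : ι → R) :
    0 ≤ x ⬝ᵥ D *ᵥ x := by
  rw [hD.dotProduct_mulVec_self]
  exact Finset.sum_nonneg fun i _ ↦ mul_nonneg (hD₀ i) (sq_nonneg _)

theorem dotProduct_mulVec_self_le {M : R} (hD : D.IsDiag) (hDM : ∀ i, D i i ≤ M) (x : ι → R) :
    x ⬝ᵥ D *ᵥ x ≤ M * (x ⬝ᵥ x) := by
  rw [hD.dotProduct_mulVec_self, dotProduct, Finset.mul_sum]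
  exact Finset.sum_le_sum fun i _ ↦ by rw [← sq]; exact mul_le_mul_of_nonneg_right (hDM i) (sq_nonneg _)

end Matrix.IsDiag

theorem EuclideanSpace.dotProduct_self_of_mem_unit_sphere {ι : Type*} [Fintype ι]
    {x : EuclideanSpace ℝ ι} (hx : x ∈ Metric.sphere 0 1) : x ⬝ᵥ x = 1 := by
  have := real_inner_self_eq_norm_sq x
  rw [EuclideanSpace.inner_eq_star_dotProduct, mem_sphere_zero_iff_norm.1 hx] at this
  simpa using this

section IntegralRatio

variable {X : Type*} [MeasurableSpace X] (μ : Measure X) [IsFiniteMeasure μ] {t : X → ℝ} {M n : ℝ}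

theorem integrable_exp_of_le (ht : Measurable t) (htM : ∀ x, t x ≤ M) :
    Integrable (fun x ↦ exp (t x)) μ :=
  .of_bound ht.exp.aestronglyMeasurable (exp M) <| .of_forall fun x ↦ by
    simpa [abs_of_pos (exp_pos _)] using htM x

theorem integrable_one_add_div_rpow (ht : Measurable t) (hn : 0 < n) (ht₀ : ∀ x, 0 ≤ t x)
    (htM : ∀ x, t x ≤ M) : Integrable (fun x ↦ (1 + t x / n) ^ n) μ :=
  .of_bound ((measurable_const.add (ht.div_const n)).pow_const n).aestronglyMeasurable (exp M) <|
    .of_forall fun x ↦ by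
      rw [norm_of_nonneg (rpow_nonneg (by linarith [div_nonneg (ht₀ x) hn.le]) _)]
      exact (one_add_div_rpow_le_exp (ht₀ x) hn).trans (exp_le_exp.2 (htM x))

theorem integral_exp_div_integral_one_add_div_rpow_mem_Icc [NeZero μ] (ht : Measurable t)
    (hn : 0 < n) (ht₀ : ∀ x, 0 ≤ t x) (htM : ∀ x, t x ≤ M) :
    (∫ x, exp (t x) ∂μ) / ∫ x, (1 + t x / n) ^ n ∂μ ∈ Set.Icc 1 (exp (M ^ 2 / (2 * n))) := by
  have hexp := integrable_exp_of_le μ ht htM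
  have hpow := integrable_one_add_div_rpow μ ht hn ht₀ htM
  have hbase (x : X) : 1 ≤ 1 + t x / n := by linarith [div_nonneg (ht₀ x) hn.le]
  have hpow_le_exp : ∫ x, (1 + t x / n) ^ n ∂μ ≤ ∫ x, exp (t x) ∂μ :=
    integral_mono hpow hexp fun x ↦ one_add_div_rpow_le_exp (ht₀ x) hn
  have hexp_le : ∫ x, exp (t x) ∂μ ≤ (∫ x, (1 + t x / n) ^ n ∂μ) * exp (M ^ 2 / (2 * n)) := by
    rw [← integral_mul_const]
    refine integral_mono hexp (hpow.mul_const _) fun x ↦ ?_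
    refine (exp_le_one_add_div_rpow_mul_exp (ht₀ x) hn).trans ?_
    gcongr
    exacts [rpow_nonneg (zero_le_one.trans (hbase x)) _, ht₀ x, htM x]
  have hpow_pos : 0 < ∫ x, (1 + t x / n) ^ n ∂μ :=
    calc 0 < μ.real Set.univ := measureReal_univ_pos
      _ = ∫ _, (1 : ℝ) ∂μ := by simp
      _ ≤ ∫ x, (1 + t x / n) ^ n ∂μ :=
        integral_mono (integrable_const 1) hpow fun x ↦ one_le_rpow (hbase x) hn.le
  rw [Set.mem_Icc, one_le_div hpow_pos, div_le_iff₀ hpow_pos, mul_comm]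
  exact ⟨hpow_le_exp, hexp_le⟩

end IntegralRatio

theorem stmt_3_general (d : ℕ) (D : Matrix (Fin d) (Fin d) ℝ)
    (hdiag : D.IsDiag) (hpsd : ∀ i, 0 ≤ D i i)
    (Dmax : ℝ) (hle : ∀ i, D i i ≤ Dmax)
    (n : ℝ) (hn : 1 ≤ n)
    (σ : Measure (Metric.sphere (0 : EuclideanSpace ℝ (Fin d)) 1))
    (hσ : σ = (volume : Measure (EuclideanSpace ℝ (Fin d))).toSphere)
    (p q : Metric.sphere (0 : EuclideanSpace ℝ (Fin d)) 1 → ℝ)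
    (hp : ∀ x, p x = Real.exp ((x : EuclideanSpace ℝ (Fin d)) ⬝ᵥ (D *ᵥ (x : EuclideanSpace ℝ (Fin d)))) /
        ∫ y, Real.exp ((y : EuclideanSpace ℝ (Fin d)) ⬝ᵥ (D *ᵥ (y : EuclideanSpace ℝ (Fin d)))) ∂σ)
    (hq : ∀ x, q x = ((x : EuclideanSpace ℝ (Fin d)) ⬝ᵥ ((1 + n⁻¹ • D) *ᵥ (x : EuclideanSpace ℝ (Fin d)))) ^ n /
        ∫ y, ((y : EuclideanSpace ℝ (Fin d)) ⬝ᵥ ((1 + n⁻¹ • D) *ᵥ (y : EuclideanSpace ℝ (Fin d)))) ^ n ∂σ)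
    (v : Metric.sphere (0 : EuclideanSpace ℝ (Fin d)) 1)
    (hv : D *ᵥ (v : EuclideanSpace ℝ (Fin d)) = 0) :
    1 ≤ q v / p v ∧ q v / p v ≤ Real.exp (Dmax ^ 2 / (2 * n)) := by
  subst hσ
  have : Nontrivial (EuclideanSpace ℝ (Fin d)) := nontrivial_of_ne _ 0 (ne_zero_of_mem_unit_sphere v)
  have : NeZero (volume : Measure (EuclideanSpace ℝ (Fin d))).toSphere := ⟨Measure.toSphere_ne_zero _⟩
  have hunit (x : Metric.sphere (0 : EuclideanSpace ℝ (Fin d)) 1) :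
      (x : EuclideanSpace ℝ (Fin d)) ⬝ᵥ (x : EuclideanSpace ℝ (Fin d)) = 1 :=
    EuclideanSpace.dotProduct_self_of_mem_unit_sphere x.2
  have hform (x : Metric.sphere (0 : EuclideanSpace ℝ (Fin d)) 1) :
      (x : EuclideanSpace ℝ (Fin d)) ⬝ᵥ ((1 + n⁻¹ • D) *ᵥ (x : EuclideanSpace ℝ (Fin d))) =
        1 + (x : EuclideanSpace ℝ (Fin d)) ⬝ᵥ (D *ᵥ (x : EuclideanSpace ℝ (Fin d))) / n := by
    rw [add_mulVec, one_mulVec, dotProduct_add, smul_mulVec, dotProduct_smul, hunit, smul_eq_mul,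
      inv_mul_eq_div]
  have hcont : Continuous fun x : Metric.sphere (0 : EuclideanSpace ℝ (Fin d)) 1 ↦
      (x : EuclideanSpace ℝ (Fin d)) ⬝ᵥ (D *ᵥ (x : EuclideanSpace ℝ (Fin d))) := by
    fun_prop
  have hratio := integral_exp_div_integral_one_add_div_rpow_mem_Icc
    (volume : Measure (EuclideanSpace ℝ (Fin d))).toSphere hcont.measurable
    (by linarith : 0 < n) (fun x ↦ hdiag.dotProduct_mulVec_self_nonneg hpsd _)
    (fun x ↦ (hdiag.dotProduct_mulVec_self_le hle _).trans_eq (by rw [hunit, mul_one]))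
  simpa only [hp, hq, hform, hv, dotProduct_zero, zero_div, add_zero, one_rpow, exp_zero, one_div,
    inv_div_inv, Set.mem_Icc] using hratio

theorem stmt_3 (d : ℕ) (hd : 2 ≤ d) (D : Matrix (Fin d) (Fin d) ℝ)
    (hdiag : D.IsDiag) (hpsd : ∀ i, 0 ≤ D i i)
    (Dmax : ℝ) (hle : ∀ i, D i i ≤ Dmax) (hmem : ∃ i, D i i = Dmax)
    (hmin : ∃ i, D i i = 0)
    (n : ℝ) (hn : 1 ≤ n)
    (σ : Measure (Metric.sphere (0 : EuclideanSpace ℝ (Fin d)) 1))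
    (hσ : σ = (volume : Measure (EuclideanSpace ℝ (Fin d))).toSphere)
    (p q : Metric.sphere (0 : EuclideanSpace ℝ (Fin d)) 1 → ℝ)
    (hp : ∀ x, p x = Real.exp ((x : EuclideanSpace ℝ (Fin d)) ⬝ᵥ (D *ᵥ (x : EuclideanSpace ℝ (Fin d)))) /
        ∫ y, Real.exp ((y : EuclideanSpace ℝ (Fin d)) ⬝ᵥ (D *ᵥ (y : EuclideanSpace ℝ (Fin d)))) ∂σ)
    (hq : ∀ x, q x = ((x : EuclideanSpace ℝ (Fin d)) ⬝ᵥ ((1 + n⁻¹ • D) *ᵥ (x : EuclideanSpace ℝ (Fin d)))) ^ n /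
        ∫ y, ((y : EuclideanSpace ℝ (Fin d)) ⬝ᵥ ((1 + n⁻¹ • D) *ᵥ (y : EuclideanSpace ℝ (Fin d)))) ^ n ∂σ)
    (v : Metric.sphere (0 : EuclideanSpace ℝ (Fin d)) 1)
    (hv : D *ᵥ (v : EuclideanSpace ℝ (Fin d)) = 0) :
    1 ≤ q v / p v ∧ q v / p v ≤ Real.exp (Dmax ^ 2 / (2 * n)) :=
  stmt_3_general d D hdiag hpsd Dmax hle n hn σ hσ p q hp hq v hv
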